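/- arXiv:2106.04743 — 2 statements merged into one kernel-verified Lean document; each statement's English description precedes it below -/
import Mathlib

section
/- Under the assumptions of the DCAe descent lemma, if the extrapolation points y^k satisfy (L + l)·D_φ(x^k, y^k) ≤ δ·L·D_φ(x^{k−1}, x^k) with δ ∈ (0,1), then for every k ≥ 0: F(x^{k+1}) ≤ F(x^k) + δL·D_φ(x^{k−1}, x^k) − L·D_φ(x^k, x^{k+1}). -/
/-- Bregman distance associated with `φ`. -/
noncomputable def Dphi {E : Type*} [NormedAddCommGroup E] [InnerProductSpace ℝ E]
    [CompleteSpace E] (φ : E → ℝ) (x y : E) : ℝ :=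
  φ x - φ y - (inner ℝ (gradient φ y) (x - y) : ℝ)

/-- Convex subdifferential of `h` at `x`. -/
def ConvexSubdiff {E : Type*} [NormedAddCommGroup E] [InnerProductSpace ℝ E]
    (h : E → ℝ) (x : E) : Set E :=
  {ξ | ∀ z, h x + (inner ℝ ξ (z - x) : ℝ) ≤ h z}

/-!
Convexity of `L φ - f` and of `l φ + f` bounds `f (x (k+1))` from above and `f (x k)` from below by
the linearisation of `f` at `y k`, up to `L D_φ(x (k+1), y k)` and `l D_φ(x k, y k)`. The first-order
optimality condition of the subproblem tested against `x k`, together with the subgradient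
inequality for `h` at `x k`, cancels every linear term, and the three-point identity of the Bregman
distance leaves `F (x (k+1)) ≤ F (x k) + (L + l) D_φ(x k, y k) - L D_φ(x k, x (k+1))`. The condition
on the extrapolation points finishes the proof.
-/

open Set AffineMap

section Convexity

variable {E : Type*} [NormedAddCommGroup E] [InnerProductSpace ℝ E]

theorem ConvexOn.add_fderiv_sub_le {u : E → ℝ} (hu : ConvexOn ℝ univ u) {a : E}
    (hd : DifferentiableAt ℝ u a) (w : E) : u a + fderiv ℝ u a (w - a) ≤ u w := by
  have hline : HasDerivAt (u ∘ lineMap (k := ℝ) a w) (fderiv ℝ u a (w - a)) 0 := by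
    refine HasFDerivAt.comp_hasDerivAt_of_eq _ hd.hasFDerivAt hasDerivAt_lineMap ?_
    simp
  have hslope := (hu.comp_affineMap (lineMap a w)).le_slope_of_hasDerivAt
    (mem_univ 0) (mem_univ 1) zero_lt_one hline
  simp only [slope_def_field, Function.comp_apply, lineMap_apply_zero, lineMap_apply_one] at hslope
  linarith

theorem ConvexOn.sub_le_fderiv_of_isMinOn_add {g ψ : E → ℝ} (hg : ConvexOn ℝ univ g) {b : E}
    (hψ : DifferentiableAt ℝ ψ b) (hmin : IsMinOn (ψ + g) univ b) (w : E) :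
    g b - g w ≤ fderiv ℝ ψ b (w - b) := by
  -- Replacing `g` by its chord on `[b, w]` keeps `0` a minimiser on `[0, 1]` and makes `r`
  -- differentiable.
  set r : ℝ → ℝ := fun t => ψ (lineMap b w t) + lineMap (g b) (g w) t
  have hr : HasDerivAt r (fderiv ℝ ψ b (w - b) + (g w - g b)) 0 := by
    refine HasDerivAt.add ?_ hasDerivAt_lineMap
    refine HasFDerivAt.comp_hasDerivAt_of_eq _ hψ.hasFDerivAt hasDerivAt_lineMap ?_
    simp
  have hrmin : IsMinOn r (Icc 0 1) 0 := by
    intro t ht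
    have hchord : g (lineMap b w t) ≤ lineMap (g b) (g w) t := by
      simpa only [lineMap_apply_module, smul_eq_mul] using
        hg.2 (mem_univ b) (mem_univ w) (sub_nonneg.2 ht.2) ht.1 (sub_add_cancel 1 t)
    have := hmin (mem_univ (lineMap b w t))
    simp only [mem_ofPred_eq, Pi.add_apply, r, lineMap_apply_zero] at this ⊢
    linarith
  have := hrmin.localize.hasFDerivWithinAt_nonneg hr.hasFDerivAt.hasFDerivWithinAt
    (y := 1) (mem_posTangentConeAt_of_segment_subset (by simp [segment_eq_Icc]))
  simp only [ContinuousLinearMap.toSpanSingleton_apply, one_smul] at this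
  linarith

end Convexity

open scoped RealInnerProductSpace

section Bregman

variable {E : Type*} [NormedAddCommGroup E] [InnerProductSpace ℝ E] [CompleteSpace E]

theorem Dphi_add_inner_gradient_sub (φ : E → ℝ) (a b w : E) :
    Dphi φ b w + ⟪gradient φ b - gradient φ w, a - b⟫ = Dphi φ a w - Dphi φ a b := by
  have hsplit : a - w = (a - b) + (b - w) := by abel
  rw [Dphi, Dphi, Dphi, hsplit, inner_add_right, inner_sub_left]
  ring

theorem le_add_inner_gradient_add_Dphi {f φ : E → ℝ} {L : ℝ}
    (hLf : ConvexOn ℝ univ (fun x => L * φ x - f x)) {w : E}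
    (hf : DifferentiableAt ℝ f w) (hφ : DifferentiableAt ℝ φ w) (b : E) :
    f b ≤ f w + ⟪gradient f w, b - w⟫ + L * Dphi φ b w := by
  have hderiv : HasFDerivAt (fun x => L * φ x - f x) (L • fderiv ℝ φ w - fderiv ℝ f w) w :=
    (hφ.hasFDerivAt.const_mul L).sub hf.hasFDerivAt
  have := hLf.add_fderiv_sub_le hderiv.differentiableAt b
  rw [hderiv.fderiv] at this
  simp only [Dphi, inner_gradient_left, sub_apply, smul_apply, smul_eq_mul] at this ⊢
  linarith

theorem sub_Dphi_le_add_inner_gradient {f φ : E → ℝ} {l : ℝ}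
    (hlf : ConvexOn ℝ univ (fun x => l * φ x + f x)) {w : E}
    (hf : DifferentiableAt ℝ f w) (hφ : DifferentiableAt ℝ φ w) (a : E) :
    f w + ⟪gradient f w, a - w⟫ - l * Dphi φ a w ≤ f a := by
  have hderiv : HasFDerivAt (fun x => l * φ x + f x) (l • fderiv ℝ φ w + fderiv ℝ f w) w :=
    (hφ.hasFDerivAt.const_mul l).add hf.hasFDerivAt
  have := hlf.add_fderiv_sub_le hderiv.differentiableAt a
  rw [hderiv.fderiv] at this
  simp only [Dphi, inner_gradient_left, add_apply, smul_apply, smul_eq_mul] at this ⊢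
  linarith

theorem sub_le_inner_gradient_of_isMin {g φ : E → ℝ} {L : ℝ} (hg : ConvexOn ℝ univ g)
    {p b : E} (hφ : DifferentiableAt ℝ φ b)
    (hmin : ∀ z, L * φ b + g b - ⟪p, b⟫ ≤ L * φ z + g z - ⟪p, z⟫) (a : E) :
    g b - g a ≤ L * ⟪gradient φ b, a - b⟫ - ⟪p, a - b⟫ := by
  have hderiv : HasFDerivAt (fun x => L * φ x - ⟪p, x⟫) (L • fderiv ℝ φ b - innerSL ℝ p) b :=
    (hφ.hasFDerivAt.const_mul L).sub (innerSL ℝ p).hasFDerivAt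
  have hmin' : IsMinOn ((fun x => L * φ x - ⟪p, x⟫) + g) univ b := fun z _ => by
    simp only [mem_ofPred_eq, Pi.add_apply]
    linarith [hmin z]
  have := hg.sub_le_fderiv_of_isMinOn_add hderiv.differentiableAt hmin' a
  rw [hderiv.fderiv] at this
  simpa only [inner_gradient_left, sub_apply, smul_apply,
    smul_eq_mul, innerSL_apply_apply] using this

end Bregman

theorem dc_objective_le_of_bregman_step {E : Type*} [NormedAddCommGroup E]
    [InnerProductSpace ℝ E] [CompleteSpace E] {f g h φ : E → ℝ} {L l : ℝ}
    (hLf : ConvexOn ℝ univ (fun x => L * φ x - f x))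
    (hlf : ConvexOn ℝ univ (fun x => l * φ x + f x)) (hg : ConvexOn ℝ univ g)
    (hf : Differentiable ℝ f) (hφ : Differentiable ℝ φ) {a b w ξ : E}
    (hξ : ξ ∈ ConvexSubdiff h a)
    (hmin : ∀ z, L * φ b + g b - ⟪L • gradient φ w - gradient f w + ξ, b⟫
        ≤ L * φ z + g z - ⟪L • gradient φ w - gradient f w + ξ, z⟫) :
    f b + g b - h b ≤ f a + g a - h a + (L + l) * Dphi φ a w - L * Dphi φ a b := by
  have hfb := le_add_inner_gradient_add_Dphi hLf (hf w) (hφ w) b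
  have hfa := sub_Dphi_le_add_inner_gradient hlf (hf w) (hφ w) a
  have hgb := sub_le_inner_gradient_of_isMin hg (hφ b) hmin a
  have hhb := hξ b
  have hthreePoint := Dphi_add_inner_gradient_sub φ a b w
  have hgrad : ⟪gradient f w, a - b⟫ = ⟪gradient f w, a - w⟫ - ⟪gradient f w, b - w⟫ := by
    rw [← inner_sub_right, sub_sub_sub_cancel_right]
  have hsubgrad : ⟪ξ, b - a⟫ = -⟪ξ, a - b⟫ := by rw [← inner_neg_right, neg_sub]
  rw [inner_add_left, inner_sub_left, real_inner_smul_left, hgrad] at hgb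
  rw [hsubgrad] at hhb
  rw [inner_sub_left] at hthreePoint
  linear_combination hfb + hfa + hgb + hhb + L * hthreePoint

theorem stmt4_general {E : Type*} [NormedAddCommGroup E] [InnerProductSpace ℝ E]
    [FiniteDimensional ℝ E]
    (f g h φ : E → ℝ) (L l δ : ℝ)
    (hf : ContDiff ℝ 1 f) (hφ : ContDiff ℝ 1 φ)
    (hLf : ConvexOn ℝ Set.univ (fun x => L * φ x - f x))
    (hlf : ConvexOn ℝ Set.univ (fun x => l * φ x + f x))
    (hg : ConvexOn ℝ Set.univ g)
    (x y ξ : ℕ → E)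
    (hext : ∀ k, (L + l) * Dphi φ (x k) (y k) ≤ δ * L * Dphi φ (x (k - 1)) (x k))
    (hξ : ∀ k, ξ k ∈ ConvexSubdiff h (x k))
    (hmin : ∀ k, ∀ z : E,
      L * φ (x (k + 1)) + g (x (k + 1))
          - (inner ℝ (L • gradient φ (y k) - gradient f (y k) + ξ k) (x (k + 1)) : ℝ)
        ≤ L * φ z + g z
          - (inner ℝ (L • gradient φ (y k) - gradient f (y k) + ξ k) z : ℝ)) :
    ∀ k : ℕ,
      f (x (k + 1)) + g (x (k + 1)) - h (x (k + 1))
        ≤ (f (x k) + g (x k) - h (x k))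
          + δ * L * Dphi φ (x (k - 1)) (x k) - L * Dphi φ (x k) (x (k + 1)) := by
  intro k
  have hstep := dc_objective_le_of_bregman_step hLf hlf hg (hf.differentiable one_ne_zero)
    (hφ.differentiable one_ne_zero) (hξ k) (hmin k)
  linarith [hext k]

theorem stmt4 {E : Type*} [NormedAddCommGroup E] [InnerProductSpace ℝ E]
    [FiniteDimensional ℝ E]
    (f g h φ : E → ℝ) (L l ρ δ : ℝ) (hL : 0 < L) (hl : 0 ≤ l) (hρ : 0 < ρ)
    (hδ : δ ∈ Set.Ioo (0 : ℝ) 1)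
    (hf : ContDiff ℝ 1 f) (hφ : ContDiff ℝ 1 φ)
    (hφsc : ConvexOn ℝ Set.univ (fun x => φ x - ρ / 2 * ‖x‖ ^ 2))
    (hLf : ConvexOn ℝ Set.univ (fun x => L * φ x - f x))
    (hlf : ConvexOn ℝ Set.univ (fun x => l * φ x + f x))
    (hg : ConvexOn ℝ Set.univ g) (hglsc : LowerSemicontinuous g)
    (hh : ConvexOn ℝ Set.univ h)
    (x y ξ : ℕ → E) (β : ℕ → ℝ)
    (hy : ∀ k, y k = x k + β k • (x k - x (k - 1)))
    (hext : ∀ k, (L + l) * Dphi φ (x k) (y k) ≤ δ * L * Dphi φ (x (k - 1)) (x k))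
    (hξ : ∀ k, ξ k ∈ ConvexSubdiff h (x k))
    (hmin : ∀ k, ∀ z : E,
      L * φ (x (k + 1)) + g (x (k + 1))
          - (inner ℝ (L • gradient φ (y k) - gradient f (y k) + ξ k) (x (k + 1)) : ℝ)
        ≤ L * φ z + g z
          - (inner ℝ (L • gradient φ (y k) - gradient f (y k) + ξ k) z : ℝ)) :
    ∀ k : ℕ,
      f (x (k + 1)) + g (x (k + 1)) - h (x (k + 1))
        ≤ (f (x k) + g (x k) - h (x k))
          + δ * L * Dphi φ (x (k - 1)) (x k) - L * Dphi φ (x k) (x (k + 1)) :=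
  stmt4_general f g h φ L l δ hf hφ hLf hlf hg x y ξ hext hξ hmin
end

section
/- Let G = Lφ + g with φ continuous convex differentiable and g proper lsc convex, let F = G − H with H convex continuous. Suppose x^{k_j} → x*, y^{k_j−1} → x*, ξ^{k_j−1} → ξ*, and x^{k_j} minimizes z ↦ G(z) − ⟨L∇φ(y^{k_j−1}) − ∇f(y^{k_j−1}) + ξ^{k_j−1}, z⟩ with ∇f continuous. Then limsup_j G(x^{k_j}) ≤ G(x*), and consequently F(x^{k_j}) → F(x*). -/
/-!
Testing the minimality of `x_j` against `z = x*` gives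
`G x_j ≤ G x* + ⟪v_j, x_j - x*⟫`, where the tilt vectors `v_j` converge because the gradients
are continuous; the error term therefore tends to zero, so `limsup G x_j ≤ G x*`. Lower
semicontinuity of `G` supplies the matching `liminf` bound, hence `G x_j → G x*`, and
`F = G - H` converges because `H` is continuous.
-/

open Filter Topology

theorem LowerSemicontinuousAt.tendsto_of_eventually_le {X α : Type*} [TopologicalSpace X]
    {l : Filter α} {G : X → ℝ} {x₀ : X} (hG : LowerSemicontinuousAt G x₀) {x : α → X} {u : α → ℝ}
    (hx : Tendsto x l (𝓝 x₀)) (hu : Tendsto u l (𝓝 (G x₀))) (hle : ∀ᶠ j in l, G (x j) ≤ u j) :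
    Tendsto (fun j => G (x j)) l (𝓝 (G x₀)) := by
  rw [tendsto_order]
  refine ⟨fun a ha => hx.eventually (hG a ha), fun b hb => ?_⟩
  filter_upwards [hle, hu.eventually (gt_mem_nhds hb)] with j hGu hub
  exact hGu.trans_lt hub

section

variable {E : Type*} [NormedAddCommGroup E] [InnerProductSpace ℝ E]

theorem ContDiff.continuous_gradient [CompleteSpace E] {f : E → ℝ} (hf : ContDiff ℝ 1 f) :
    Continuous (gradient f) :=
  (InnerProductSpace.toDual ℝ E).symm.continuous.comp (hf.continuous_fderiv one_ne_zero)

theorem LowerSemicontinuousAt.tendsto_of_sub_inner_le {α : Type*} {l : Filter α}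
    {G : E → ℝ} {x₀ v₀ : E} (hG : LowerSemicontinuousAt G x₀) {x v : α → E}
    (hx : Tendsto x l (𝓝 x₀)) (hv : Tendsto v l (𝓝 v₀))
    (hmin : ∀ j, G (x j) - inner ℝ (v j) (x j) ≤ G x₀ - inner ℝ (v j) x₀) :
    Tendsto (fun j => G (x j)) l (𝓝 (G x₀)) := by
  have herr : Tendsto (fun j => inner ℝ (v j) (x j - x₀)) l (𝓝 0) := by
    simpa using hv.inner (hx.sub_const x₀)
  refine hG.tendsto_of_eventually_le hx (by simpa using herr.const_add (G x₀))
    (Eventually.of_forall fun j => ?_)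
  rw [inner_sub_right]
  linarith [hmin j]

end

theorem stmt17_general {E : Type*} [NormedAddCommGroup E] [InnerProductSpace ℝ E]
    [FiniteDimensional ℝ E]
    (f g φ H : E → ℝ) (L : ℝ)
    (hφ : ContDiff ℝ 1 φ)
    (hglsc : LowerSemicontinuous g)
    (hHcont : Continuous H)
    (hf : ContDiff ℝ 1 f)
    (G : E → ℝ) (hG : G = fun z => L * φ z + g z)
    (F : E → ℝ) (hF : F = fun z => G z - H z)
    (xj yj ξj : ℕ → E) (xstar ξstar : E)
    (hxj : Tendsto xj atTop (nhds xstar))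
    (hyj : Tendsto yj atTop (nhds xstar))
    (hξj : Tendsto ξj atTop (nhds ξstar))
    (hmin : ∀ j : ℕ, ∀ z : E,
      G (xj j) - (inner ℝ (L • gradient φ (yj j) - gradient f (yj j) + ξj j) (xj j) : ℝ)
        ≤ G z - (inner ℝ (L • gradient φ (yj j) - gradient f (yj j) + ξj j) z : ℝ)) :
    limsup (fun j => G (xj j)) atTop ≤ G xstar ∧
    Tendsto (fun j => F (xj j)) atTop (nhds (F xstar)) := by
  have hGlsc : LowerSemicontinuous G := by
    rw [hG]
    exact (continuous_const.mul hφ.continuous).lowerSemicontinuous.add hglsc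
  have htilt : Tendsto (fun j => L • gradient φ (yj j) - gradient f (yj j) + ξj j) atTop
      (𝓝 (L • gradient φ xstar - gradient f xstar + ξstar)) :=
    ((((hφ.continuous_gradient.tendsto xstar).comp hyj).const_smul L).sub
      ((hf.continuous_gradient.tendsto xstar).comp hyj)).add hξj
  have hGconv : Tendsto (fun j => G (xj j)) atTop (𝓝 (G xstar)) :=
    (hGlsc.lowerSemicontinuousAt xstar).tendsto_of_sub_inner_le hxj htilt fun j => hmin j xstar
  refine ⟨hGconv.limsup_eq.le, ?_⟩
  rw [hF]
  exact hGconv.sub ((hHcont.tendsto xstar).comp hxj)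

theorem stmt17 {E : Type*} [NormedAddCommGroup E] [InnerProductSpace ℝ E]
    [FiniteDimensional ℝ E]
    (f g h φ H : E → ℝ) (L : ℝ) (hL : 0 < L)
    (hφ : ContDiff ℝ 1 φ) (hφconv : ConvexOn ℝ Set.univ φ)
    (hg : ConvexOn ℝ Set.univ g) (hglsc : LowerSemicontinuous g)
    (hH : ConvexOn ℝ Set.univ H) (hHcont : Continuous H)
    (hf : ContDiff ℝ 1 f)
    (G : E → ℝ) (hG : G = fun z => L * φ z + g z)
    (F : E → ℝ) (hF : F = fun z => G z - H z)
    (xj yj ξj : ℕ → E) (xstar ξstar : E)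
    (hxj : Tendsto xj atTop (nhds xstar))
    (hyj : Tendsto yj atTop (nhds xstar))
    (hξj : Tendsto ξj atTop (nhds ξstar))
    (hmin : ∀ j : ℕ, ∀ z : E,
      G (xj j) - (inner ℝ (L • gradient φ (yj j) - gradient f (yj j) + ξj j) (xj j) : ℝ)
        ≤ G z - (inner ℝ (L • gradient φ (yj j) - gradient f (yj j) + ξj j) z : ℝ)) :
    limsup (fun j => G (xj j)) atTop ≤ G xstar ∧
    Tendsto (fun j => F (xj j)) atTop (nhds (F xstar)) :=
  stmt17_general f g φ H L hφ hglsc hHcont hf G hG F hF xj yj ξj xstar ξstar hxj hyj hξj hmin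
end
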